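/- Let (H,E) be a slim orthogonal semigroup of order m satisfying the CM condition, k a field, R = k[H], and let v ∈ ω_H. Then 𝔟 is a reduction of 𝔪 with respect to K_R/t^vR; that is, there exists n > 0 such that 𝔪^{n+1}·K_R ⊆ 𝔟·(𝔪^n·K_R) + t^v·R, as k-subspaces of the group algebra k[ℤ^d]. -/

import Mathlib

open scoped Classical

namespace AGpaper

/-- The degree of an integer vector: sum of coordinates. -/
def degZ {d : ℕ} (x : Fin d → ℤ) : ℤ := ∑ i, x i

/-- The support of an integer vector. -/
def suppZ {d : ℕ} (x : Fin d → ℤ) : Set (Fin d) := {i | x i ≠ 0}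

/-- An orthogonal semigroup of order `m` in `ℕ^d`. -/
def IsOrthogonal (d m : ℕ) (H : AddSubmonoid (Fin d → ℤ)) : Prop :=
  H.FG ∧
  (∀ x ∈ H, ∀ i, 0 ≤ x i) ∧
  (∀ i : Fin d, Pi.single i (m : ℤ) ∈ H) ∧
  (∃ n : ℕ, 0 < n ∧ ∀ x ∈ H, ∀ i, (m : ℤ) ∣ (n : ℤ) * x i) ∧
  (∀ i : Fin d, ∀ m' : ℕ, 0 < m' → m' < m → Pi.single i (m' : ℤ) ∉ H)

/-- The semigroup ring `R = k[H]` as a `k`-submodule of the group algebra `k[ℤ^d]`. -/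
noncomputable def Rmod (k : Type*) [Field k] {d : ℕ} (H : AddSubmonoid (Fin d → ℤ)) :
    Submodule k (AddMonoidAlgebra k (Fin d → ℤ)) :=
  Submodule.span k {f | ∃ h ∈ H, f = AddMonoidAlgebra.single h (1 : k)}

/-- The graded maximal ideal `𝔪` of `R = k[H]`, as a `k`-submodule of `k[ℤ^d]`:
the span of the monomials `t^h`, `0 ≠ h ∈ H`. -/
noncomputable def mIdeal (k : Type*) [Field k] {d : ℕ} (H : AddSubmonoid (Fin d → ℤ)) :
    Submodule k (AddMonoidAlgebra k (Fin d → ℤ)) :=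
  Submodule.span k {f | ∃ h ∈ H, h ≠ 0 ∧ f = AddMonoidAlgebra.single h (1 : k)}

/-- The ideal `𝔟` of `R = k[H]` generated by the differences `t^{m eᵢ} - t^{m eⱼ}`,
as a `k`-submodule of `k[ℤ^d]`. -/
noncomputable def bIdeal (k : Type*) [Field k] (d m : ℕ) (H : AddSubmonoid (Fin d → ℤ)) :
    Submodule k (AddMonoidAlgebra k (Fin d → ℤ)) :=
  Rmod k H * Submodule.span k {f | ∃ i j : Fin d,
    f = AddMonoidAlgebra.single (Pi.single i (m : ℤ)) (1 : k) -
        AddMonoidAlgebra.single (Pi.single j (m : ℤ)) (1 : k)}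

/-- The principal module `t^w·R`, as a `k`-submodule of `k[ℤ^d]`. -/
noncomputable def twR (k : Type*) [Field k] {d : ℕ} (H : AddSubmonoid (Fin d → ℤ))
    (w : Fin d → ℤ) : Submodule k (AddMonoidAlgebra k (Fin d → ℤ)) :=
  Submodule.span k {f | ∃ h ∈ H, f = AddMonoidAlgebra.single (w + h) (1 : k)}

/-- Membership in `ℤE = ℤ(m e₁) + ⋯ + ℤ(m e_d)`. -/
def inZE (d m : ℕ) (x : Fin d → ℤ) : Prop := ∀ i : Fin d, (m : ℤ) ∣ x i

/-- The Apéry set of an orthogonal semigroup w.r.t. its extreme rays `m eᵢ`. -/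
def apery (d m : ℕ) (H : AddSubmonoid (Fin d → ℤ)) : Set (Fin d → ℤ) :=
  {x | x ∈ H ∧ ∀ i : Fin d, x - Pi.single i (m : ℤ) ∉ H}

/-- The socle: maximal elements of the Apéry set with respect to `≤_H`. -/
def soc (d m : ℕ) (H : AddSubmonoid (Fin d → ℤ)) : Set (Fin d → ℤ) :=
  {x | x ∈ apery d m H ∧ ∀ y ∈ apery d m H, y - x ∈ H → x = y}

/-- The CM condition: every element of `G(H)` is uniquely `a + z`, `a ∈ Ap(H,E)`, `z ∈ ℤE`. -/
def CMcond (d m : ℕ) (H : AddSubmonoid (Fin d → ℤ)) : Prop :=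
  ∀ g ∈ AddSubgroup.closure (H : Set (Fin d → ℤ)),
    ∃! a, a ∈ apery d m H ∧ inZE d m (g - a)

/-- `ω_H = {-w + m e₁ + ⋯ + m e_d + h : w ∈ Soc(H,E), h ∈ H}`. -/
def omegaH (d m : ℕ) (H : AddSubmonoid (Fin d → ℤ)) : Set (Fin d → ℤ) :=
  {x | ∃ w ∈ soc d m H, ∃ h ∈ H, x = -w + (fun _ => (m : ℤ)) + h}

/-- `H` is slim: every nonzero `h ∈ H` with `supp w ⊄ supp h` for some nonzero `w ∈ H`
has degree at least `m`. -/
def Slim (d m : ℕ) (H : AddSubmonoid (Fin d → ℤ)) : Prop :=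
  ∀ h ∈ H, h ≠ 0 → (∃ w ∈ H, w ≠ 0 ∧ ¬ suppZ w ⊆ suppZ h) → (m : ℤ) ≤ degZ h

/-- The graded canonical module `K_R`, as a `k`-submodule of the group algebra `k[ℤ^d]`:
the span of the monomials `t^x`, `x ∈ ω_H`. -/
noncomputable def KR (k : Type*) [Field k] (d m : ℕ) (H : AddSubmonoid (Fin d → ℤ)) :
    Submodule k (AddMonoidAlgebra k (Fin d → ℤ)) :=
  Submodule.span k {f | ∃ x ∈ omegaH d m H, f = AddMonoidAlgebra.single x (1 : k)}

/-!
Let `t^z` be a monomial of `𝔪^{n+1} K_R`, so `z = x + h₀ + ⋯ + hₙ` with `x ∈ ω_H` and nonzero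
`hᵢ ∈ H`, and write `z - v = a + ζ` with `a ∈ Ap(H,E)` and `ζ ∈ ℤE` (CM condition). If `ζ ≥ 0` then
`t^z ∈ t^v R`. Otherwise some coordinate of `z - x` is bounded independently of `z`; by slimness the
`hᵢ` of degree `< m` have full support, so there are boundedly many of them. By pigeonhole modulo
`m`, the other summands group into blocks whose sums lie in `ℕE`, each block contributing at least
as many extreme rays as it has summands. Hence `z = y + r` with `t^y ∈ 𝔪^q K_R`, `r` a sum of `N`
extreme rays, `q + N ≥ n + 1` and `N` large. As `t^{m eᵢ} - t^{m eⱼ} ∈ 𝔟`, rays can be moved between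
coordinates modulo `𝔟 𝔪ⁿ K_R`; moving enough of them from the largest coordinate of `r` into the
negative coordinates of `ζ` lands in `t^v R`.
-/

section Rays

variable {d m : ℕ}

lemma degZ_add (x y : Fin d → ℤ) : degZ (x + y) = degZ x + degZ y :=
  Finset.sum_add_distrib

lemma degZ_sub (x y : Fin d → ℤ) : degZ (x - y) = degZ x - degZ y :=
  Finset.sum_sub_distrib _ _

lemma degZ_single (i : Fin d) (a : ℤ) : degZ (Pi.single i a) = a := by
  simp [degZ]

lemma single_ne_zero_of_one_le (hm : 1 ≤ m) (i : Fin d) :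
    (Pi.single i (m : ℤ) : Fin d → ℤ) ≠ 0 :=
  Pi.single_ne_zero_iff.mpr (by omega)

lemma degZ_list_sum (L : List (Fin d → ℤ)) : degZ L.sum = (L.map degZ).sum := by
  induction L with
  | nil => simp [degZ]
  | cons p L ih => simp [degZ_add, ih]

lemma eq_toNat_ediv_mul_of_dvd {a : ℤ} (ha : 0 ≤ a) (hdvd : (m : ℤ) ∣ a) :
    a = ((a / m).toNat : ℤ) * m := by
  rw [Int.toNat_of_nonneg (Int.ediv_nonneg ha (Int.natCast_nonneg m)),
    Int.ediv_mul_cancel hdvd]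

/-- The monoid `ℕE` spanned by the extreme rays `m eᵢ`. -/
def rayMonoid (d m : ℕ) : AddSubmonoid (Fin d → ℤ) where
  carrier := {r | ∀ j, 0 ≤ r j ∧ (m : ℤ) ∣ r j}
  add_mem' ha hb j := ⟨add_nonneg (ha j).1 (hb j).1, dvd_add (ha j).2 (hb j).2⟩
  zero_mem' _ := ⟨le_rfl, dvd_zero _⟩

lemma rayMonoid_le {H : AddSubmonoid (Fin d → ℤ)}
    (hmE : ∀ i : Fin d, Pi.single i (m : ℤ) ∈ H) : rayMonoid d m ≤ H := by
  intro r hr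
  rw [← Finset.univ_sum_single r]
  refine sum_mem fun j _ => ?_
  rw [eq_toNat_ediv_mul_of_dvd (hr j).1 (hr j).2, ← nsmul_eq_mul, Pi.single_smul]
  exact AddSubmonoid.nsmul_mem H (hmE j) _

lemma exists_degZ_eq_of_mem_rayMonoid {r : Fin d → ℤ} (hr : r ∈ rayMonoid d m) :
    ∃ N : ℕ, degZ r = N * m :=
  ⟨_, eq_toNat_ediv_mul_of_dvd (Finset.sum_nonneg fun j _ => (hr j).1)
    (Finset.dvd_sum fun j _ => (hr j).2)⟩

lemma eq_zero_of_mem_rayMonoid_of_degZ_eq_zero {r : Fin d → ℤ} (hr : r ∈ rayMonoid d m)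
    (h : degZ r = 0) : r = 0 := by
  funext j
  exact (Finset.sum_eq_zero_iff_of_nonneg fun j _ => (hr j).1).mp h j (Finset.mem_univ j)

lemma exists_eq_add_single_of_mem_rayMonoid (hm : 1 ≤ m) {R : Fin d → ℤ}
    (hR : R ∈ rayMonoid d m) {N : ℕ} (hN : degZ R = (N + 1) * m) :
    ∃ i, ∃ R₀ ∈ rayMonoid d m, degZ R₀ = N * m ∧ R = R₀ + Pi.single i (m : ℤ) := by
  obtain ⟨i, hi⟩ : ∃ i, R i ≠ 0 := by
    by_contra! h
    rw [eq_zero_of_mem_rayMonoid_of_degZ_eq_zero hR ?_] at hN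
    · simp [degZ] at hN
      omega
    · exact Finset.sum_eq_zero fun i _ => h i
  have hmi : (m : ℤ) ≤ R i := Int.le_of_dvd (lt_of_le_of_ne (hR i).1 (Ne.symm hi)) (hR i).2
  refine ⟨i, R - Pi.single i (m : ℤ), fun j => ?_, ?_, by abel⟩
  · by_cases hj : j = i
    · subst hj
      simp only [Pi.sub_apply, Pi.single_eq_same]
      exact ⟨by omega, dvd_sub (hR j).2 dvd_rfl⟩
    · simpa [hj] using hR j
  · rw [degZ_sub, degZ_single, hN]
    ring

end Rays

section Semigroup

variable {d m : ℕ} {H : AddSubmonoid (Fin d → ℤ)}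

lemma omegaH_add_mem {x h : Fin d → ℤ} (hx : x ∈ omegaH d m H) (hh : h ∈ H) :
    x + h ∈ omegaH d m H := by
  obtain ⟨w, hw, h₀, hh₀, rfl⟩ := hx
  exact ⟨w, hw, h₀ + h, H.add_mem hh₀ hh, by abel⟩

lemma omegaH_subset_closure (hmE : ∀ i : Fin d, Pi.single i (m : ℤ) ∈ H) :
    omegaH d m H ⊆ AddSubgroup.closure (H : Set (Fin d → ℤ)) := by
  rintro _ ⟨w, hw, h, hh, rfl⟩
  have hconst : (fun _ => (m : ℤ)) ∈ H :=
    rayMonoid_le hmE fun _ => ⟨Int.natCast_nonneg m, dvd_rfl⟩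
  exact add_mem (add_mem (neg_mem (AddSubgroup.subset_closure hw.1.1))
    (AddSubgroup.subset_closure hconst)) (AddSubgroup.subset_closure hh)

lemma apery_eq_of_dvd_sub (hCM : CMcond d m H) {a a' : Fin d → ℤ} (ha : a ∈ apery d m H)
    (ha' : a' ∈ apery d m H) (hdvd : ∀ i, (m : ℤ) ∣ a i - a' i) : a = a' := by
  obtain ⟨u, -, hu⟩ := hCM a (AddSubgroup.subset_closure ha.1)
  rw [hu a ⟨ha, fun i => by simp⟩, hu a' ⟨ha', hdvd⟩]

lemma apery_finite (hCM : CMcond d m H) (hm : 1 ≤ m) : (apery d m H).Finite := by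
  have : NeZero m := ⟨by omega⟩
  refine Set.finite_coe_iff.mp (Finite.of_injective
    (fun a : apery d m H => fun i => ((a.1 i : ℤ) : ZMod m)) fun a b hab => ?_)
  refine Subtype.ext (apery_eq_of_dvd_sub hCM a.2 b.2 fun i => ?_)
  rw [← ZMod.intCast_zmod_eq_zero_iff_dvd, Int.cast_sub, sub_eq_zero]
  exact congrFun hab i

lemma exists_eq_add_apery_add (hCM : CMcond d m H)
    (hmE : ∀ i : Fin d, Pi.single i (m : ℤ) ∈ H) {z v : Fin d → ℤ} (hz : z ∈ omegaH d m H)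
    (hv : v ∈ omegaH d m H) :
    ∃ a ∈ apery d m H, ∃ ζ : Fin d → ℤ, (∀ j, (m : ℤ) ∣ ζ j) ∧ z = v + a + ζ := by
  obtain ⟨a, ⟨ha, hdvd⟩, -⟩ :=
    hCM (z - v) (sub_mem (omegaH_subset_closure hmE hz) (omegaH_subset_closure hmE hv))
  exact ⟨a, ha, z - v - a, hdvd, by abel⟩

lemma exists_bound_sub_omegaH (hCM : CMcond d m H) (hm : 1 ≤ m)
    (hcoord : ∀ x ∈ H, ∀ i, 0 ≤ x i) (v : Fin d → ℤ) :
    ∃ C : ℕ, ∀ a ∈ apery d m H, ∀ x ∈ omegaH d m H, ∀ j, v j + a j - x j ≤ C := by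
  obtain ⟨B, hB⟩ := (((apery_finite hCM hm).insert v).prod (Set.finite_univ (α := Fin d))).image
    (fun p => p.1 p.2) |>.bddAbove
  have hbound : ∀ a ∈ insert v (apery d m H), ∀ j, a j ≤ B :=
    fun a ha j => hB ⟨(a, j), ⟨ha, trivial⟩, rfl⟩
  refine ⟨(3 * B).toNat, fun a ha x hx j => ?_⟩
  obtain ⟨w, hw, h, hh, rfl⟩ := hx
  have hv := hbound v (Set.mem_insert _ _) j
  have ha := hbound a (Set.mem_insert_of_mem _ ha) j
  have hw := hbound w (Set.mem_insert_of_mem _ hw.1) j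
  have hh := hcoord h hh j
  simp only [Pi.add_apply, Pi.neg_apply]
  omega

lemma Slim.pos_apply (hslim : Slim d m H) (hcoord : ∀ x ∈ H, ∀ i, 0 ≤ x i)
    (hmE : ∀ i : Fin d, Pi.single i (m : ℤ) ∈ H) (hm : 1 ≤ m) {p : Fin d → ℤ} (hp : p ∈ H)
    (hne : p ≠ 0) (hdeg : degZ p < m) (j : Fin d) : 0 < p j := by
  by_contra hj
  refine hdeg.not_ge (hslim p hp hne ⟨Pi.single j (m : ℤ), hmE j, ?_, fun hsub => ?_⟩)
  · exact single_ne_zero_of_one_le hm j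
  · have := hsub (show j ∈ suppZ (Pi.single j (m : ℤ)) by simp [suppZ]; omega)
    exact this (by have := hcoord p hp j; simp only [suppZ] at *; omega)

end Semigroup

section Monomials

open AddMonoidAlgebra

variable (k : Type*) [Field k] {d m : ℕ} (H : AddSubmonoid (Fin d → ℤ))

lemma mIdeal_mul_KR_le : mIdeal k H * KR k d m H ≤ KR k d m H := by
  rw [mIdeal, KR, Submodule.span_mul_span]
  refine Submodule.span_le.mpr ?_
  rintro _ ⟨_, ⟨h, hh, -, rfl⟩, _, ⟨x, hx, rfl⟩, rfl⟩
  refine Submodule.subset_span ⟨x + h, omegaH_add_mem hx hh, ?_⟩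
  simp [single_mul_single, add_comm]

lemma mIdeal_pow_mul_KR_antitone : Antitone fun n => mIdeal k H ^ n * KR k d m H :=
  antitone_nat_of_succ_le fun n => by
    rw [pow_succ, mul_assoc]
    exact mul_le_mul_right (mIdeal_mul_KR_le k H) _

variable {k H}

lemma single_add_mem_mIdeal_pow_succ_mul {y h : Fin d → ℤ} {q : ℕ}
    (hy : single y (1 : k) ∈ mIdeal k H ^ q * KR k d m H) (hh : h ∈ H) (hne : h ≠ 0) :
    single (y + h) (1 : k) ∈ mIdeal k H ^ (q + 1) * KR k d m H := by
  rw [pow_succ', mul_assoc, add_comm, ← one_mul (1 : k), ← single_mul_single]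
  exact Submodule.mul_mem_mul (Submodule.subset_span ⟨h, hh, hne, rfl⟩) hy

lemma single_add_list_sum_mem {x : Fin d → ℤ} (hx : x ∈ omegaH d m H) {L : List (Fin d → ℤ)}
    (hL : ∀ p ∈ L, p ∈ H ∧ p ≠ 0) :
    single (x + L.sum) (1 : k) ∈ mIdeal k H ^ L.length * KR k d m H := by
  induction L with
  | nil =>
    rw [List.sum_nil, add_zero, List.length_nil, pow_zero, one_mul]
    exact Submodule.subset_span ⟨x, hx, rfl⟩
  | cons p L ih =>
    rw [List.sum_cons, add_left_comm, add_comm, List.length_cons]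
    have hp := hL p List.mem_cons_self
    exact single_add_mem_mIdeal_pow_succ_mul (ih fun q hq => hL q (List.mem_cons_of_mem p hq))
      hp.1 hp.2

lemma mIdeal_pow_mul_KR_le_span (n : ℕ) :
    mIdeal k H ^ n * KR k d m H ≤ Submodule.span k {f | ∃ x ∈ omegaH d m H,
      ∃ L : List (Fin d → ℤ), (∀ p ∈ L, p ∈ H ∧ p ≠ 0) ∧ L.length = n ∧
        f = single (x + L.sum) (1 : k)} := by
  induction n with
  | zero =>
    rw [pow_zero, one_mul, KR]
    refine Submodule.span_mono ?_
    rintro _ ⟨x, hx, rfl⟩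
    exact ⟨x, hx, [], by simp, rfl, by simp⟩
  | succ n ih =>
    rw [pow_succ', mul_assoc]
    refine (mul_le_mul_right ih _).trans ?_
    rw [mIdeal, Submodule.span_mul_span]
    refine Submodule.span_mono ?_
    rintro _ ⟨_, ⟨h, hh, hne, rfl⟩, _, ⟨x, hx, L, hL, hlen, rfl⟩, rfl⟩
    refine ⟨x, hx, h :: L, ?_, by simp [hlen], ?_⟩
    · simpa [hh, hne] using hL
    · simp only [single_mul_single, mul_one, List.sum_cons]
      congr 1
      abel

lemma single_add_mem_of_mem_rayMonoid (hm : 1 ≤ m) (hmE : ∀ i : Fin d, Pi.single i (m : ℤ) ∈ H)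
    {y R : Fin d → ℤ} {q N : ℕ} (hy : single y (1 : k) ∈ mIdeal k H ^ q * KR k d m H)
    (hR : R ∈ rayMonoid d m) (hN : degZ R = N * m) :
    single (y + R) (1 : k) ∈ mIdeal k H ^ (q + N) * KR k d m H := by
  induction N generalizing R with
  | zero =>
    rw [eq_zero_of_mem_rayMonoid_of_degZ_eq_zero hR (by simpa using hN), add_zero, add_zero]
    exact hy
  | succ N ih =>
    obtain ⟨i, R₀, hR₀, hR₀N, rfl⟩ := exists_eq_add_single_of_mem_rayMonoid hm hR hN
    rw [← add_assoc, ← add_assoc]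
    exact single_add_mem_mIdeal_pow_succ_mul (ih hR₀ hR₀N) (hmE i) (single_ne_zero_of_one_le hm i)

variable (k H) in
lemma single_sub_single_mem_bIdeal (i j : Fin d) :
    single (Pi.single i (m : ℤ)) (1 : k) - single (Pi.single j (m : ℤ)) 1 ∈ bIdeal k d m H := by
  rw [bIdeal, ← one_mul (_ - _)]
  exact Submodule.mul_mem_mul (Submodule.subset_span ⟨0, H.zero_mem, rfl⟩)
    (Submodule.subset_span ⟨i, j, rfl⟩)

lemma single_add_sub_single_add_mem (hm : 1 ≤ m) (hmE : ∀ i : Fin d, Pi.single i (m : ℤ) ∈ H)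
    {n N q : ℕ} {y R R' : Fin d → ℤ} (hy : single y (1 : k) ∈ mIdeal k H ^ q * KR k d m H)
    (hR : R ∈ rayMonoid d m) (hR' : R' ∈ rayMonoid d m) (hN : degZ R = N * m)
    (hN' : degZ R' = N * m) (hn : n + 1 ≤ q + N) :
    single (y + R) (1 : k) - single (y + R') 1 ∈
      bIdeal k d m H * (mIdeal k H ^ n * KR k d m H) := by
  induction N generalizing q y R R' with
  | zero =>
    rw [eq_zero_of_mem_rayMonoid_of_degZ_eq_zero hR (by simpa using hN),
      eq_zero_of_mem_rayMonoid_of_degZ_eq_zero hR' (by simpa using hN'), sub_self]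
    exact zero_mem _
  | succ N ih =>
    obtain ⟨i, R₀, hR₀, hR₀N, rfl⟩ := exists_eq_add_single_of_mem_rayMonoid hm hR hN
    obtain ⟨j, R₀', hR₀', hR₀'N, rfl⟩ := exists_eq_add_single_of_mem_rayMonoid hm hR' hN'
    set eᵢ := (Pi.single i (m : ℤ) : Fin d → ℤ)
    set eⱼ := (Pi.single j (m : ℤ) : Fin d → ℤ)
    have hpivot : single (y + R₀') (1 : k) ∈ mIdeal k H ^ n * KR k d m H :=
      mIdeal_pow_mul_KR_antitone k H (by omega)
        (single_add_mem_of_mem_rayMonoid hm hmE hy hR₀' hR₀'N)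
    have hshift : single (y + eᵢ) (1 : k) ∈ mIdeal k H ^ (q + 1) * KR k d m H :=
      single_add_mem_mIdeal_pow_succ_mul hy (hmE i) (single_ne_zero_of_one_le hm i)
    have hsplit : single (y + (R₀ + eᵢ)) (1 : k) - single (y + (R₀' + eⱼ)) 1 =
        (single (y + eᵢ + R₀) 1 - single (y + eᵢ + R₀') 1) +
          (single eᵢ 1 - single eⱼ 1) * single (y + R₀') 1 := by
      rw [sub_mul, single_mul_single, single_mul_single, one_mul,
        show y + (R₀ + eᵢ) = y + eᵢ + R₀ by abel, show y + (R₀' + eⱼ) = eⱼ + (y + R₀') by abel,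
        show y + eᵢ + R₀' = eᵢ + (y + R₀') by abel]
      abel
    rw [hsplit]
    exact add_mem (ih hshift hR₀ hR₀' hR₀N hR₀'N (by omega))
      (Submodule.mul_mem_mul (single_sub_single_mem_bIdeal k H i j) hpivot)

end Monomials

/-- Pigeonhole on the images of the partial sums. -/
lemma List.exists_eq_append_append_map_sum_eq_zero {M A : Type*} [AddMonoid M] [AddGroup A]
    [Fintype A] (f : M →+ A) (L : List M) (hL : Fintype.card A ≤ L.length) :
    ∃ L₁ L₂ L₃, L = L₁ ++ L₂ ++ L₃ ∧ L₂ ≠ [] ∧ f L₂.sum = 0 := by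
  have key : ∀ α β : ℕ, α < β → β ≤ L.length → f (L.take α).sum = f (L.take β).sum →
      ∃ L₁ L₂ L₃, L = L₁ ++ L₂ ++ L₃ ∧ L₂ ≠ [] ∧ f L₂.sum = 0 := by
    intro α β hαβ hβ heq
    have htake : L.take β = L.take α ++ (L.drop α).take (β - α) := by
      rw [← List.take_add, Nat.add_sub_cancel' hαβ.le]
    refine ⟨L.take α, (L.drop α).take (β - α), L.drop β, ?_, ?_, ?_⟩
    · rw [← htake, List.take_append_drop]
    · exact List.ne_nil_of_length_pos (by simp; omega)
    · rwa [htake, List.sum_append, map_add, left_eq_add] at heq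
  obtain ⟨α, β, hne, heq⟩ := Fintype.exists_ne_map_eq_of_card_lt
    (fun i : Fin (Fintype.card A + 1) => f (L.take i).sum) (by simp)
  rcases lt_or_gt_of_ne (Fin.val_ne_of_ne hne) with h | h
  · exact key α β h (by omega) heq
  · exact key β α h (by omega) heq.symm

section Decomposition

variable {d m : ℕ} {H : AddSubmonoid (Fin d → ℤ)}

/-- A block of summands whose sum lies in `ℕE` is replaced by that sum, which consists of at
least as many extreme rays as the block has summands, since each summand has degree `≥ m`. -/
lemma exists_sublist_sum_eq_add_rayMonoid (hm : 1 ≤ m) (hcoord : ∀ x ∈ H, ∀ i, 0 ≤ x i)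
    (B : List (Fin d → ℤ)) (hB : ∀ p ∈ B, p ∈ H ∧ (m : ℤ) ≤ degZ p) :
    ∃ (L : List (Fin d → ℤ)) (R : Fin d → ℤ) (N : ℕ), L.Sublist B ∧ L.length < m ^ d ∧
      R ∈ rayMonoid d m ∧ degZ R = N * m ∧ B.length ≤ L.length + N ∧ B.sum = L.sum + R := by
  induction hlen : B.length using Nat.strong_induction_on generalizing B with
  | _ len ih =>
  subst hlen
  by_cases hsmall : B.length < m ^ d
  · exact ⟨B, 0, 0, List.Sublist.refl B, hsmall, zero_mem _, by simp [degZ], by simp, by simp⟩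
  have : NeZero m := ⟨by omega⟩
  obtain ⟨B₁, B₂, B₃, rfl, hB₂, hσ⟩ := List.exists_eq_append_append_map_sum_eq_zero
    (AddMonoidHom.compLeft (Int.castAddHom (ZMod m)) (Fin d)) B (by simp [ZMod.card]; omega)
  have hB₂H : ∀ p ∈ B₂, p ∈ H ∧ (m : ℤ) ≤ degZ p := fun p hp => hB p (by simp [hp])
  have hσ : B₂.sum ∈ rayMonoid d m := fun j =>
    ⟨hcoord _ (list_sum_mem fun p hp => (hB₂H p hp).1) j,
      (ZMod.intCast_zmod_eq_zero_iff_dvd _ _).mp (congrFun hσ j)⟩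
  obtain ⟨N₂, hN₂⟩ := exists_degZ_eq_of_mem_rayMonoid hσ
  have hlen₂ : B₂.length ≤ N₂ := by
    have := List.card_nsmul_le_sum (B₂.map degZ) m (by simpa using fun p hp => (hB₂H p hp).2)
    rw [← degZ_list_sum, hN₂, List.length_map, nsmul_eq_mul] at this
    exact_mod_cast le_of_mul_le_mul_right this (by omega)
  obtain ⟨L, R, N, hsub, hL, hR, hRN, hlenN, hsum⟩ := ih (B₁ ++ B₃).length
    (by simpa using List.length_pos_of_ne_nil hB₂) (B₁ ++ B₃)
    (fun p hp => hB p (by simp at hp ⊢; tauto)) rfl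
  refine ⟨L, R + B₂.sum, N + N₂, hsub.trans ((List.sublist_append_left B₁ B₂).append_right B₃),
    hL, add_mem hR hσ, by rw [degZ_add, hRN, hN₂]; push_cast; ring, ?_, ?_⟩
  · simp only [List.length_append] at hlenN ⊢
    omega
  · simp only [List.sum_append] at hsum ⊢
    rw [add_right_comm, hsum]
    abel

/-- Slimness makes the summands of degree `< m` have full support, so there are at most as many
of them as the smallest coordinate of the sum; the others are traded for extreme rays. -/
lemma exists_ray_decomposition (hslim : Slim d m H) (hcoord : ∀ x ∈ H, ∀ i, 0 ≤ x i)
    (hmE : ∀ i : Fin d, Pi.single i (m : ℤ) ∈ H) (hm : 1 ≤ m) {L : List (Fin d → ℤ)}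
    (hL : ∀ p ∈ L, p ∈ H ∧ p ≠ 0) :
    ∃ (P : List (Fin d → ℤ)) (R : Fin d → ℤ) (N : ℕ), (∀ p ∈ P, p ∈ H ∧ p ≠ 0) ∧
      R ∈ rayMonoid d m ∧ degZ R = N * m ∧ L.length ≤ P.length + N ∧ L.sum = P.sum + R ∧
      ∀ i, (P.length : ℤ) < L.sum i + m ^ d := by
  set F := L.filter fun p => decide (degZ p < m)
  set B := L.filter fun p => !decide (degZ p < m)
  have hperm : (F ++ B).Perm L := List.filter_append_perm _ L
  have hF : ∀ p ∈ F, p ∈ L ∧ degZ p < m := fun p hp => by simpa [F] using hp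
  have hB : ∀ p ∈ B, p ∈ L ∧ (m : ℤ) ≤ degZ p := fun p hp => by simpa [B] using hp
  obtain ⟨P, R, N, hsub, hP, hR, hRN, hBN, hBsum⟩ :=
    exists_sublist_sum_eq_add_rayMonoid hm hcoord B fun p hp =>
      ⟨(hL p (hB p hp).1).1, (hB p hp).2⟩
  refine ⟨F ++ P, R, N, fun p hp => ?_, hR, hRN, ?_, ?_, fun i => ?_⟩
  · rcases List.mem_append.mp hp with hp | hp
    · exact hL p (hF p hp).1
    · exact hL p (hB p (hsub.subset hp)).1
  · have := hperm.length_eq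
    simp only [List.length_append] at this ⊢
    omega
  · rw [← hperm.sum_eq, List.sum_append, hBsum, List.sum_append, add_assoc]
  · have hFcount := List.card_nsmul_le_sum F (fun _ => 1) fun p hp j =>
      Slim.pos_apply hslim hcoord hmE hm (hL p (hF p hp).1).1 (hL p (hF p hp).1).2 (hF p hp).2 j
    have hBnonneg := hcoord _ (list_sum_mem fun p hp => (hL p (hB p hp).1).1) i
    have hLsum : L.sum i = F.sum i + B.sum i := by
      rw [← hperm.sum_eq, List.sum_append, Pi.add_apply]
    have := hFcount i
    simp only [Pi.smul_apply, nsmul_eq_mul, mul_one] at this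
    have hP' : (P.length : ℤ) < m ^ d := by exact_mod_cast hP
    simp only [List.length_append]
    push_cast
    omega

end Decomposition

section Reduction

open AddMonoidAlgebra

variable {k : Type*} [Field k] {d m : ℕ} {H : AddSubmonoid (Fin d → ℤ)}

/-- `R'` moves the deficit `∑ⱼ max (-ζⱼ) 0` of `ζ` from coordinate `l` of `R` into the negative
coordinates of `ζ`. -/
lemma exists_rebalance {ζ R : Fin d → ℤ} (hζ : ∀ j, (m : ℤ) ∣ ζ j) (hR : R ∈ rayMonoid d m)
    (l : Fin d) (hRl : ∑ j, max (-ζ j) 0 ≤ R l) (hζl : ∑ j, max (-ζ j) 0 ≤ ζ l) :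
    ∃ R' ∈ rayMonoid d m, degZ R' = degZ R ∧ ζ + R' - R ∈ rayMonoid d m := by
  set D := ∑ j, max (-ζ j) 0
  have hdvd : ∀ j, (m : ℤ) ∣ max (-ζ j) 0 := fun j => by
    rcases max_cases (-ζ j) 0 with ⟨h, -⟩ | ⟨h, -⟩ <;> rw [h]
    exacts [(hζ j).neg_right, dvd_zero _]
  have hD : (m : ℤ) ∣ D := Finset.dvd_sum fun j _ => hdvd j
  have hD₀ : 0 ≤ D := Finset.sum_nonneg fun j _ => le_max_right _ _
  have hsingle : ∀ j, (m : ℤ) ∣ (Pi.single l D : Fin d → ℤ) j := fun j => by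
    rw [Pi.single_apply]
    split_ifs
    exacts [hD, dvd_zero _]
  have hR'dvd : ∀ j, (m : ℤ) ∣ R j + max (-ζ j) 0 - (Pi.single l D : Fin d → ℤ) j :=
    fun j => dvd_sub (dvd_add (hR j).2 (hdvd j)) (hsingle j)
  refine ⟨R + (fun j => max (-ζ j) 0) - Pi.single l D, fun j => ⟨?_, hR'dvd j⟩, ?_,
    fun j => ⟨?_, dvd_sub (dvd_add (hζ j) (hR'dvd j)) (hR j).2⟩⟩
  · have := (hR j).1
    by_cases hj : j = l
    · subst hj
      simp only [Pi.sub_apply, Pi.add_apply, Pi.single_eq_same]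
      omega
    · simp only [Pi.sub_apply, Pi.add_apply, Pi.single_eq_of_ne hj]
      omega
  · rw [degZ_sub, degZ_add, degZ_single]
    exact add_sub_cancel_right _ _
  · by_cases hj : j = l
    · subst hj
      simp only [Pi.sub_apply, Pi.add_apply, Pi.single_eq_same]
      omega
    · simp only [Pi.sub_apply, Pi.add_apply, Pi.single_eq_of_ne hj]
      omega

lemma single_add_mem_of_rebalance (hm : 1 ≤ m) (hmE : ∀ i : Fin d, Pi.single i (m : ℤ) ∈ H)
    {v y R a ζ : Fin d → ℤ} {q N n : ℕ}
    (hy : single y (1 : k) ∈ mIdeal k H ^ q * KR k d m H)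
    (hR : R ∈ rayMonoid d m) (hRN : degZ R = N * m) (hn : n + 1 ≤ q + N) (ha : a ∈ H)
    (hζ : ∀ j, (m : ℤ) ∣ ζ j) (hyR : y + R = v + a + ζ) (l : Fin d)
    (hRl : ∑ j, max (-ζ j) 0 ≤ R l) (hζl : ∑ j, max (-ζ j) 0 ≤ ζ l) :
    single (y + R) (1 : k) ∈
      bIdeal k d m H * (mIdeal k H ^ n * KR k d m H) + twR k H v := by
  obtain ⟨R', hR', hdeg, hζ'⟩ := exists_rebalance hζ hR l hRl hζl
  rw [← sub_add_cancel (single (y + R) (1 : k)) (single (y + R') 1)]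
  refine Submodule.add_mem_sup
    (single_add_sub_single_add_mem hm hmE hy hR hR' hRN (hdeg ▸ hRN) hn)
    (Submodule.subset_span ⟨a + (ζ + R' - R), H.add_mem ha (rayMonoid_le hmE hζ'), ?_⟩)
  rw [show y = v + a + ζ - R by rw [← hyR]; abel]
  congr 1
  abel

lemma single_add_list_sum_mem_of_neg (hslim : Slim d m H) (hcoord : ∀ x ∈ H, ∀ i, 0 ≤ x i)
    (hmE : ∀ i : Fin d, Pi.single i (m : ℤ) ∈ H) (hm : 1 ≤ m) {x v a ζ : Fin d → ℤ} {C n : ℕ}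
    {L : List (Fin d → ℤ)} (hx : x ∈ omegaH d m H) (hL : ∀ p ∈ L, p ∈ H ∧ p ≠ 0)
    (hlen : L.length = n + 1) (hn : d * (d + 1) * C + C + m ^ d ≤ n) (ha : a ∈ H)
    (hζ : ∀ j, (m : ℤ) ∣ ζ j) (hz : x + L.sum = v + a + ζ) (hζL : ∀ j, L.sum j - C ≤ ζ j)
    {i₀ : Fin d} (hi₀ : ζ i₀ < 0) :
    single (x + L.sum) (1 : k) ∈
      bIdeal k d m H * (mIdeal k H ^ n * KR k d m H) + twR k H v := by
  obtain ⟨P, R, N, hP, hR, hRN, hlenN, hsum, hPlen⟩ :=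
    exists_ray_decomposition hslim hcoord hmE hm hL
  have hPC : P.length < C + m ^ d := by
    have := hPlen i₀
    have := hζL i₀
    exact_mod_cast (show (P.length : ℤ) < C + m ^ d by omega)
  have hN : d * (d + 1) * C < N := by omega
  obtain ⟨l, -, hl⟩ := Finset.exists_max_image Finset.univ R ⟨i₀, Finset.mem_univ _⟩
  have hdRl : (d : ℤ) * ((d + 1) * C) < d * R l :=
    calc (d : ℤ) * ((d + 1) * C) < N := by rw [← mul_assoc]; exact_mod_cast hN
      _ ≤ N * m := le_mul_of_one_le_right (by positivity) (by exact_mod_cast hm)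
      _ = degZ R := hRN.symm
      _ ≤ d * R l := by
        simpa [degZ] using Finset.sum_le_card_nsmul Finset.univ R (R l) hl
  have hRl : (d : ℤ) * C + C < R l := by
    linarith [lt_of_mul_lt_mul_left hdRl (by positivity),
      show ((d : ℤ) + 1) * C = d * C + C by ring]
  have hζl : R l - C ≤ ζ l := by
    have := hζL l
    have := hcoord _ (list_sum_mem fun p hp => (hP p hp).1) l
    rw [hsum, Pi.add_apply] at *
    linarith
  have hD : ∑ j, max (-ζ j) 0 ≤ d * C := by
    simpa using Finset.sum_le_card_nsmul Finset.univ (fun j => max (-ζ j) 0) (C : ℤ) fun j _ => by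
      have := hζL j
      have := hcoord _ (list_sum_mem fun p hp => (hL p hp).1) j
      omega
  rw [hsum, ← add_assoc]
  exact single_add_mem_of_rebalance hm hmE (single_add_list_sum_mem hx hP) hR hRN (by omega) ha hζ
    (by rw [add_assoc, ← hsum, hz]) l (by linarith [(Nat.cast_nonneg C : (0 : ℤ) ≤ C)])
    (by linarith)

variable (k) in
lemma single_add_list_sum_mem_reduction (hslim : Slim d m H) (hcoord : ∀ x ∈ H, ∀ i, 0 ≤ x i)
    (hmE : ∀ i : Fin d, Pi.single i (m : ℤ) ∈ H) (hm : 1 ≤ m) (hCM : CMcond d m H)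
    {v : Fin d → ℤ} (hv : v ∈ omegaH d m H) {C n : ℕ}
    (hC : ∀ a ∈ apery d m H, ∀ x ∈ omegaH d m H, ∀ j, v j + a j - x j ≤ C)
    (hn : d * (d + 1) * C + C + m ^ d ≤ n) {x : Fin d → ℤ} (hx : x ∈ omegaH d m H)
    {L : List (Fin d → ℤ)} (hL : ∀ p ∈ L, p ∈ H ∧ p ≠ 0) (hlen : L.length = n + 1) :
    single (x + L.sum) (1 : k) ∈
      bIdeal k d m H * (mIdeal k H ^ n * KR k d m H) + twR k H v := by
  obtain ⟨a, ha, ζ, hζ, hz⟩ := exists_eq_add_apery_add hCM hmE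
    (omegaH_add_mem hx (list_sum_mem fun p hp => (hL p hp).1)) hv
  by_cases hneg : ∃ i₀, ζ i₀ < 0
  · obtain ⟨i₀, hi₀⟩ := hneg
    refine single_add_list_sum_mem_of_neg hslim hcoord hmE hm hx hL hlen hn ha.1 hζ hz
      (fun j => ?_) hi₀
    have := hC a ha x hx j
    have := congrFun hz j
    simp only [Pi.add_apply] at this
    omega
  · simp only [not_exists, not_lt] at hneg
    refine Submodule.mem_sup_right (Submodule.subset_span ⟨a + ζ, ?_, by rw [hz, add_assoc]⟩)
    exact H.add_mem ha.1 (rayMonoid_le hmE fun j => ⟨hneg j, hζ j⟩)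

end Reduction

theorem slim_reduction_canonical_general (k : Type*) [Field k] {d m : ℕ}
    (hm : 1 ≤ m)
    (H : AddSubmonoid (Fin d → ℤ)) (horth : IsOrthogonal d m H)
    (hslim : Slim d m H) (hCM : CMcond d m H)
    (v : Fin d → ℤ) (hv : v ∈ omegaH d m H) :
    ∃ n : ℕ, 0 < n ∧
      mIdeal k H ^ (n + 1) * KR k d m H ≤
        bIdeal k d m H * (mIdeal k H ^ n * KR k d m H) + twR k H v := by
  obtain ⟨-, hcoord, hmE, -, -⟩ := horth
  obtain ⟨C, hC⟩ := exists_bound_sub_omegaH hCM hm hcoord v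
  refine ⟨d * (d + 1) * C + C + m ^ d, by have := Nat.pow_pos (n := d) hm; omega, ?_⟩
  refine (mIdeal_pow_mul_KR_le_span _).trans (Submodule.span_le.mpr ?_)
  rintro _ ⟨x, hx, L, hL, hlen, rfl⟩
  exact single_add_list_sum_mem_reduction k hslim hcoord hmE hm hCM hv hC le_rfl hx hL hlen

/-- If `H` is a slim orthogonal semigroup satisfying the CM condition
and `v ∈ ω_H`, then `𝔟` is a reduction of `𝔪` with respect to `K_R/t^vR`:
`𝔪^{n+1}·K_R ⊆ 𝔟·(𝔪^n·K_R) + t^v·R` for some `n > 0`. -/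
theorem slim_reduction_canonical (k : Type*) [Field k] {d m : ℕ}
    (hd : 1 ≤ d) (hm : 1 ≤ m)
    (H : AddSubmonoid (Fin d → ℤ)) (horth : IsOrthogonal d m H)
    (hslim : Slim d m H) (hCM : CMcond d m H)
    (v : Fin d → ℤ) (hv : v ∈ omegaH d m H) :
    ∃ n : ℕ, 0 < n ∧
      mIdeal k H ^ (n + 1) * KR k d m H ≤
        bIdeal k d m H * (mIdeal k H ^ n * KR k d m H) + twR k H v :=
  slim_reduction_canonical_general k hm H horth hslim hCM v hv

end AGpaper
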